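/- arXiv:1612.07084 — 2 statements merged into one kernel-verified Lean document; each statement's English description precedes it below -/
import Mathlib

section
/- Let K be a field, let k, r, β, f be positive integers with n = k + r, let m ∈ Fin f be the requested file index, and let P be an r×k matrix over K. Suppose E is a k×k matrix with entries in {0,1} such that: (1) every row of E has exactly β ones; (2) every column of E has exactly β ones; (3) for every row index t, the set J_t = {l : E_{t,l} = 1} contains the support of no nonzero vector v ∈ K^k with P·v = 0. For each l ∈ Fin k, let σ_l be an injective map from {t : E_{t,l} = 1} to Fin β. Fix an arbitrary matrix U over K with rows indexed by Fin k and columns indexed by pairs (m′, a) ∈ Fin f × Fin β. Given files X : Fin f → Matrix (Fin β) (Fin k) K, define for each systematic node l ∈ Fin k the stored column y_l ∈ K^{Fin f × Fin β} by y_l(m′, a) = X_{m′}(a, l), and for each parity node p ∈ Fin r the stored column y_{k+p}(m′, a) = −∑_{l ∈ Fin k} P_{p,l} · X_{m′}(a, l). Define the query matrices Q^{(l)} = U + V^{(l)} for l ∈ Fin k, where V^{(l)}_{t,(m′,a)} equals 1 if m′ = m, E_{t,l} = 1 and σ_l(t) = a, and equals 0 otherwise, and Q^{(k+p)} = U for p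 ∈ Fin r. Define the response of node j as the vector r_j = Q^{(j)} · y_j ∈ K^k. Then the responses determine the requested file: for any two collections of files X and X′ that produce identical response vectors r_1, …, r_n (with the same U, E, σ, and m), one has X_m = X′_m. -/
open Matrix

/-!
Write `d l` for the difference of the two stored columns of systematic node `l` and
`w t l := (U *ᵥ d l) t`. The parity responses say that every row `w t` lies in the code
`ker P`, while the systematic response of node `l` says that `w t l` is minus the
retrieved symbol `d l (m, σ l t)` when `E t l` and zero otherwise. So `-w t` is a codeword
supported in `J_t`, hence zero, and all retrieved symbols vanish. Since the columns of `E`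
have `β` ones and `σ l` is injective on them, every symbol of `X m - X' m` is retrieved.
-/

def ErasureCorrectable {K ι κ : Type*} [Semiring K] [Fintype κ]
    (P : Matrix ι κ K) (J : κ → Prop) : Prop :=
  ∀ v : κ → K, P *ᵥ v = 0 → (∀ l, v l ≠ 0 → J l) → v = 0

theorem ErasureCorrectable.eq_zero {K ι κ : Type*} [Ring K] [Fintype κ]
    {P : Matrix ι κ K} {J : κ → Prop} [DecidablePred J] (hJ : ErasureCorrectable P J)
    {w e : κ → K} (hw : P *ᵥ w = 0) (hwe : ∀ l, w l + (if J l then e l else 0) = 0)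
    {l : κ} (hl : J l) : e l = 0 := by
  have hv : (fun l => if J l then e l else 0) = -w := by
    ext l
    exact eq_neg_of_add_eq_zero_right (hwe l)
  have hzero := hJ (fun l => if J l then e l else 0) (by rw [hv, mulVec_neg, hw, neg_zero])
    fun l' h => by
      by_contra hl'
      exact h (if_neg hl')
  simpa [hl] using congrFun hzero l

theorem mulVec_of_ite_eq_ite {R κ μ ν : Type*} [Semiring R] [Fintype μ] [Fintype ν]
    [DecidableEq μ] [DecidableEq ν] (m : μ) (c : κ → Prop) [DecidablePred c] (g : κ → ν)
    (y : μ × ν → R) (t : κ) :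
    ((Matrix.of fun (t : κ) (p : μ × ν) => if p.1 = m ∧ c t ∧ g t = p.2 then (1 : R) else 0) *ᵥ
      y) t = if c t then y (m, g t) else 0 := by
  split_ifs with ht
  · rw [mulVec, dotProduct, Finset.sum_eq_single (m, g t)]
    · simp [ht]
    · rintro ⟨a, b⟩ - hab
      simp only [of_apply, ite_mul, one_mul, zero_mul]
      refine if_neg ?_
      rintro ⟨h₁, -, h₂⟩
      exact hab (by rw [← h₁, h₂])
    · simp
  · simp [mulVec, dotProduct, ht]

theorem mulVec_fun_sum_mul {R κ μ ι : Type*} [CommSemiring R] [Fintype μ] [Fintype ι]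
    (U : Matrix κ μ R) (c : ι → R) (y : ι → μ → R) :
    U *ᵥ (fun q => ∑ l, c l * y l q) = fun t => ∑ l, c l * (U *ᵥ y l) t := by
  have : (fun q => ∑ l, c l * y l q) = ∑ l, c l • y l := by
    ext q
    simp [Finset.sum_apply]
  ext t
  simp [this, mulVec_sum, mulVec_smul, Finset.sum_apply]

theorem exists_eq_of_injOn_of_card_eq {α : Type*} {β : ℕ} {s : Finset α} (g : α → Fin β)
    (hg : Set.InjOn g s) (hs : s.card = β) (a : Fin β) : ∃ t ∈ s, g t = a :=
  Finset.surjOn_of_injOn_of_card_le (t := Finset.univ) g (by simp [Set.MapsTo]) hg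
    (by simp [hs]) (by simp)

theorem stmt_1_general {K : Type} [Field K] {k r β f : ℕ}
    (m : Fin f) (P : Matrix (Fin r) (Fin k) K)
    (E : Fin k → Fin k → Bool)
    (hcol : ∀ l : Fin k, (Finset.univ.filter fun t => E t l).card = β)
    (hml : ∀ t : Fin k, ∀ v : Fin k → K, P.mulVec v = 0 →
      (∀ l, v l ≠ 0 → E t l) → v = 0)
    (σ : Fin k → Fin k → Fin β)
    (hσ : ∀ l t t', E t l → E t' l → σ l t = σ l t' → t = t')
    (U : Matrix (Fin k) (Fin f × Fin β) K)
    (X X' : Fin f → Matrix (Fin β) (Fin k) K)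
    -- equal responses from the `k` systematic nodes (queries `U + V⁽ˡ⁾`)
    (hsys : ∀ l : Fin k,
      (U + (Matrix.of fun (t : Fin k) (p : Fin f × Fin β) => if p.1 = m ∧ E t l ∧ σ l t = p.2 then (1 : K) else 0)).mulVec
          (fun p => X p.1 p.2 l) =
        (U + (Matrix.of fun (t : Fin k) (p : Fin f × Fin β) => if p.1 = m ∧ E t l ∧ σ l t = p.2 then (1 : K) else 0)).mulVec
          (fun p => X' p.1 p.2 l))
    -- equal responses from the `r` parity nodes (queries `U`)
    (hpar : ∀ p : Fin r,
      U.mulVec (fun q => -∑ l, P p l * X q.1 q.2 l) =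
        U.mulVec (fun q => -∑ l, P p l * X' q.1 q.2 l)) :
    X m = X' m := by
  set d : Fin k → Fin f × Fin β → K := fun l q => X q.1 q.2 l - X' q.1 q.2 l
  have hsys_diff : ∀ t l, (U *ᵥ d l) t + (if E t l then d l (m, σ l t) else 0) = 0 := by
    intro t l
    have h := congrFun (sub_eq_zero.2 (hsys l)) t
    rwa [← mulVec_sub, add_mulVec, Pi.add_apply, mulVec_of_ite_eq_ite] at h
  have hrow_mem_code : ∀ t, P *ᵥ (fun l => (U *ᵥ d l) t) = 0 := by
    intro t
    ext p
    have hd : (fun q => ∑ l, P p l * d l q) = (fun q => -∑ l, P p l * X' q.1 q.2 l) -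
        fun q => -∑ l, P p l * X q.1 q.2 l := by
      ext q
      simp only [d, Pi.sub_apply, mul_sub, Finset.sum_sub_distrib]
      ring
    have h := congrFun (mulVec_fun_sum_mul U (P p) d) t
    rw [hd, mulVec_sub, hpar p, sub_self] at h
    exact h.symm
  ext a l
  obtain ⟨t, ht, rfl⟩ := exists_eq_of_injOn_of_card_eq (σ l)
    (fun t ht t' ht' h => hσ l t t' (Finset.mem_filter.1 ht).2 (Finset.mem_filter.1 ht').2 h)
    (hcol l) a
  exact sub_eq_zero.1 <| ErasureCorrectable.eq_zero (J := fun l => E t l) (hml t)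
    (hrow_mem_code t) (hsys_diff t) (Finset.mem_filter.1 ht).2

/-- Recovery property of the PIR protocol: if the storage code is systematic with
parity part `P`, the query-structure matrix `E` is `β`-regular with rows that are
ML-correctable erasure patterns for the code `{v : P ⬝ v = 0}`, and the maps `σ l`
are injective on `{t : E t l}`, then the `n = k + r` response vectors determine the
requested file `X m`. -/
theorem stmt_1 {K : Type} [Field K] {k r β f : ℕ}
    (hk : 0 < k) (hr : 0 < r) (hβ : 0 < β) (hf : 0 < f)
    (m : Fin f) (P : Matrix (Fin r) (Fin k) K)
    (E : Fin k → Fin k → Bool)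
    (hrow : ∀ t : Fin k, (Finset.univ.filter fun l => E t l).card = β)
    (hcol : ∀ l : Fin k, (Finset.univ.filter fun t => E t l).card = β)
    (hml : ∀ t : Fin k, ∀ v : Fin k → K, P.mulVec v = 0 →
      (∀ l, v l ≠ 0 → E t l) → v = 0)
    (σ : Fin k → Fin k → Fin β)
    (hσ : ∀ l t t', E t l → E t' l → σ l t = σ l t' → t = t')
    (U : Matrix (Fin k) (Fin f × Fin β) K)
    (X X' : Fin f → Matrix (Fin β) (Fin k) K)
    -- equal responses from the `k` systematic nodes (queries `U + V⁽ˡ⁾`)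
    (hsys : ∀ l : Fin k,
      (U + (Matrix.of fun (t : Fin k) (p : Fin f × Fin β) => if p.1 = m ∧ E t l ∧ σ l t = p.2 then (1 : K) else 0)).mulVec
          (fun p => X p.1 p.2 l) =
        (U + (Matrix.of fun (t : Fin k) (p : Fin f × Fin β) => if p.1 = m ∧ E t l ∧ σ l t = p.2 then (1 : K) else 0)).mulVec
          (fun p => X' p.1 p.2 l))
    -- equal responses from the `r` parity nodes (queries `U`)
    (hpar : ∀ p : Fin r,
      U.mulVec (fun q => -∑ l, P p l * X q.1 q.2 l) =
        U.mulVec (fun q => -∑ l, P p l * X' q.1 q.2 l)) :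
    X m = X' m :=
  stmt_1_general m P E hcol hml σ hσ U X X' hsys hpar
end

section
/- Let K be a field and let k > r ≥ 1 be integers. Let P be an r×k matrix over K; since k > r, the kernel C̃ = {v ∈ K^k : P·v = 0} is nonzero. Let d̃ be the minimum Hamming weight of a nonzero vector in C̃, and set β = d̃ − 1, assuming β ≥ 1. Then there exist a k×k matrix E with entries in {0,1} and injective maps σ_l : {t : E_{t,l} = 1} → Fin β for each l ∈ Fin k such that: (1) every row of E has exactly β ones; (2) every column of E has exactly β ones; (3) for every row t, the set {l : E_{t,l} = 1} contains the support of no nonzero v ∈ K^k with P·v = 0. Consequently, for every choice of the random matrix U, every number of files f, and every requested index m, the PIR protocol built from E and σ recovers the requested file from the responses: any two collections of files producing the same n response vectors agree on the m-th file. Since each of the n nodes returns k symbols while the retrieved file consists of βk = (d̃ − 1)k symbols, the communication price of privacy of this scheme equals n/(d̃ − 1). -/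
/-!
Take for `E` the circulant band `E t l ↔ (l - t) mod k < β` and `σ l t = (l - t) mod β`.
Every row has `β < d̃` ones, so no nonzero codeword of `ker P` fits inside it.
For recovery, pass to the difference `Y = X - X'` of the two file collections. For each `t`,
the vector `w_t(l) = (U · Y(·, l))_t` lies in `ker P` by the parity responses, while the systematic
responses give `w_t(l) = -[E t l] · Y_m(σ l t, l)`; hence `w_t` is supported in row `t`,
so it vanishes. Since `σ l` maps column `l` of `E` bijectively onto `Fin β`, all of `Y_m` vanishes.
-/

open Matrix Finset

theorem card_filter_equiv_mem {α β : Type*} [Fintype α] [DecidableEq β] (e : α ≃ β) (S : Finset β) :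
    #{a | e a ∈ S} = #S := by
  rw [← card_map e.toEmbedding]
  congr 1
  ext b
  simp

section ShiftPattern

variable {G : Type*} [AddCommGroup G] [Fintype G] [DecidableEq G]

def shiftPattern (S : Finset G) (t l : G) : Bool := decide (l - t ∈ S)

theorem card_shiftPattern_row (S : Finset G) (t : G) : #{l | shiftPattern S t l} = #S := by
  simpa [shiftPattern] using card_filter_equiv_mem (Equiv.subRight t) S

theorem card_shiftPattern_col (S : Finset G) (l : G) : #{t | shiftPattern S t l} = #S := by
  simpa [shiftPattern] using card_filter_equiv_mem (Equiv.subLeft l) S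

end ShiftPattern

def shiftOffset {k : ℕ} (β : ℕ) [NeZero β] (l t : Fin k) : Fin β := Fin.ofNat β (l - t : Fin k)

theorem shiftOffset_injOn {k β : ℕ} [NeZero k] [NeZero β] {l t t' : Fin k}
    (ht : ((l - t : Fin k) : ℕ) < β) (ht' : ((l - t' : Fin k) : ℕ) < β)
    (h : shiftOffset β l t = shiftOffset β l t') : t = t' := by
  have := congrArg Fin.val h
  simp only [shiftOffset, Fin.val_ofNat, Nat.mod_eq_of_lt ht, Nat.mod_eq_of_lt ht'] at this
  exact sub_right_injective (Fin.ext this)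

theorem eq_zero_of_support_subset_of_card_lt {ι ρ K : Type*} [Fintype ι] [Semiring K] [DecidableEq K]
    {P : Matrix ρ ι K} {d : ℕ} (hd : ∀ v : ι → K, P *ᵥ v = 0 → v ≠ 0 → d ≤ hammingNorm v)
    {s : Finset ι} (hs : #s < d) {v : ι → K} (hv : P *ᵥ v = 0) (hsupp : ∀ l, v l ≠ 0 → l ∈ s) :
    v = 0 := by
  by_contra hv0
  have : hammingNorm v ≤ #s := card_le_card fun l hl => hsupp l (mem_filter.mp hl).2
  exact absurd (hd v hv hv0) (by omega)

theorem mulVec_mulVec_row {T Q ι ρ K : Type*} [Fintype Q] [Fintype ι] [CommSemiring K]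
    (P : Matrix ρ ι K) (U : Matrix T Q K) (Y : Q → ι → K) (t : T) :
    P *ᵥ (fun l => (U *ᵥ fun q => Y q l) t) = fun p => (U *ᵥ fun q => ∑ l, P p l * Y q l) t := by
  ext p
  simp only [mulVec, dotProduct, mul_sum]
  rw [sum_comm]
  exact sum_congr rfl fun _ _ => sum_congr rfl fun _ _ => mul_left_comm _ _ _

section Protocol

variable {K : Type*} [CommRing K] {T F B ι ρ : Type*} [Fintype F] [Fintype B]
  [DecidableEq F] [DecidableEq B]

/-- The matrix `V^{(l)}`: systematic node `l` receives the query `U + V^{(l)}`. -/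
def pirQueryShift (E : T → ι → Bool) (σ : ι → T → B) (m : F) (l : ι) : Matrix T (F × B) K :=
  Matrix.of fun t p => if p.1 = m ∧ E t l ∧ σ l t = p.2 then 1 else 0

theorem pirQueryShift_mulVec (E : T → ι → Bool) (σ : ι → T → B) (m : F) (l : ι)
    (x : F × B → K) (t : T) :
    (pirQueryShift E σ m l *ᵥ x) t = if E t l then x (m, σ l t) else 0 := by
  by_cases h : E t l
  · have hp : ∀ p : F × B, (p.1 = m ∧ σ l t = p.2) ↔ (m, σ l t) = p := by
      rintro ⟨a, b⟩; simp [eq_comm]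
    simp [pirQueryShift, mulVec, dotProduct, h, hp]
  · simp [pirQueryShift, mulVec, dotProduct, h]

variable [Fintype ι] {E : T → ι → Bool} {σ : ι → T → B} {P : Matrix ρ ι K}
  {U : Matrix T (F × B) K} {m : F}

theorem pir_entry_eq_zero
    (hcorr : ∀ t v, P *ᵥ v = 0 → (∀ l, v l ≠ 0 → E t l) → v = 0) (Y : F → Matrix B ι K)
    (hresp : ∀ l, (U + pirQueryShift E σ m l) *ᵥ (fun p => Y p.1 p.2 l) = 0)
    (hpar : ∀ p, U *ᵥ (fun q => ∑ l, P p l * Y q.1 q.2 l) = 0)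
    {t : T} {l : ι} (htl : E t l) : Y m (σ l t) l = 0 := by
  set w : T → ι → K := fun t l => (U *ᵥ fun q => Y q.1 q.2 l) t
  have hw : ∀ t l, w t l = -(if E t l then Y m (σ l t) l else 0) := fun t l => by
    have := congrFun (hresp l) t
    rw [add_mulVec, Pi.add_apply, pirQueryShift_mulVec] at this
    exact eq_neg_of_add_eq_zero_left this
  have hker : ∀ t, P *ᵥ w t = 0 := fun t => by
    rw [mulVec_mulVec_row]
    exact funext fun p => congrFun (hpar p) t
  have hsupp : ∀ t l, w t l ≠ 0 → E t l := fun t l hw0 => by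
    by_contra hE
    simp [hw, hE] at hw0
  simpa [hw, htl] using congrFun (hcorr t (w t) (hker t) (hsupp t)) l

theorem pir_eq_zero_of_responses_eq_zero [Fintype T]
    (hcorr : ∀ t v, P *ᵥ v = 0 → (∀ l, v l ≠ 0 → E t l) → v = 0)
    (hcol : ∀ l, #{t | E t l} = Fintype.card B)
    (hinj : ∀ l t t', E t l → E t' l → σ l t = σ l t' → t = t') (Y : F → Matrix B ι K)
    (hresp : ∀ l, (U + pirQueryShift E σ m l) *ᵥ (fun p => Y p.1 p.2 l) = 0)
    (hpar : ∀ p, U *ᵥ (fun q => ∑ l, P p l * Y q.1 q.2 l) = 0) : Y m = 0 := by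
  ext a l
  obtain ⟨t, ht, rfl⟩ := surjOn_of_injOn_of_card_le (s := {t | E t l}) (t := univ) (σ l)
    (fun _ _ => mem_coe.mpr (mem_univ _))
    (fun t ht t' ht' h => hinj l t t' (by simpa using ht) (by simpa using ht') h)
    (by rw [hcol, card_univ]) (mem_univ a)
  exact pir_entry_eq_zero hcorr Y hresp hpar (mem_filter.mp ht).2

theorem pir_recovery [Fintype T]
    (hcorr : ∀ t v, P *ᵥ v = 0 → (∀ l, v l ≠ 0 → E t l) → v = 0)
    (hcol : ∀ l, #{t | E t l} = Fintype.card B)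
    (hinj : ∀ l t t', E t l → E t' l → σ l t = σ l t' → t = t') (X X' : F → Matrix B ι K)
    (hresp : ∀ l, (U + pirQueryShift E σ m l) *ᵥ (fun p => X p.1 p.2 l) =
      (U + pirQueryShift E σ m l) *ᵥ (fun p => X' p.1 p.2 l))
    (hpar : ∀ p, U *ᵥ (fun q => -∑ l, P p l * X q.1 q.2 l) =
      U *ᵥ (fun q => -∑ l, P p l * X' q.1 q.2 l)) : X m = X' m := by
  rw [← sub_eq_zero, ← Pi.sub_apply]
  refine pir_eq_zero_of_responses_eq_zero (U := U) hcorr hcol hinj _ (fun l => ?_) (fun p => ?_)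
  · exact (mulVec_sub _ _ _).trans (sub_eq_zero.mpr (hresp l))
  · have hdiff : (fun q : F × B => ∑ l, P p l * (X - X') q.1 q.2 l) =
        (fun q => -∑ l, P p l * X' q.1 q.2 l) - (fun q => -∑ l, P p l * X q.1 q.2 l) := by
      ext q
      simp only [Pi.sub_apply, Matrix.sub_apply, mul_sub, sum_sub_distrib]
      ring
    rw [hdiff, mulVec_sub, hpar p, sub_self]

end Protocol

theorem stmt_2_general {K : Type} [Field K] [DecidableEq K] {k r : ℕ}
    (P : Matrix (Fin r) (Fin k) K)
    (dtilde : ℕ)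
    (hd_le : ∀ v : Fin k → K, P.mulVec v = 0 → v ≠ 0 → dtilde ≤ hammingNorm v)
    (hd_ex : ∃ v : Fin k → K, P.mulVec v = 0 ∧ v ≠ 0 ∧ hammingNorm v = dtilde)
    (β : ℕ) (hβ : β = dtilde - 1) (hβ1 : 1 ≤ β) :
    ∃ (E : Fin k → Fin k → Bool) (σ : Fin k → Fin k → Fin β),
      -- (1) every row of `E` has exactly `β` ones
      (∀ t : Fin k, (Finset.univ.filter fun l => E t l).card = β) ∧
      -- (2) every column of `E` has exactly `β` ones
      (∀ l : Fin k, (Finset.univ.filter fun t => E t l).card = β) ∧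
      -- (3) the rows of `E` are ML-correctable erasure patterns for `ker P`
      (∀ t : Fin k, ∀ v : Fin k → K, P.mulVec v = 0 →
        (∀ l, v l ≠ 0 → E t l) → v = 0) ∧
      -- the maps `σ l` are injective on `{t : E t l}`
      (∀ l t t', E t l → E t' l → σ l t = σ l t' → t = t') ∧
      -- recovery: equal responses imply equal requested files
      (∀ (f : ℕ) (m : Fin f) (U : Matrix (Fin k) (Fin f × Fin β) K)
          (X X' : Fin f → Matrix (Fin β) (Fin k) K),
        (∀ l : Fin k,
          (U + (Matrix.of fun (t : Fin k) (p : Fin f × Fin β) =>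
              if p.1 = m ∧ E t l ∧ σ l t = p.2 then (1 : K) else 0)).mulVec
              (fun p => X p.1 p.2 l) =
            (U + (Matrix.of fun (t : Fin k) (p : Fin f × Fin β) =>
                if p.1 = m ∧ E t l ∧ σ l t = p.2 then (1 : K) else 0)).mulVec
              (fun p => X' p.1 p.2 l)) →
        (∀ p : Fin r,
          U.mulVec (fun q => -∑ l, P p l * X q.1 q.2 l) =
            U.mulVec (fun q => -∑ l, P p l * X' q.1 q.2 l)) →
        X m = X' m) ∧
      -- cPoP: `(n·k)/(β·k) = n/(d̃_min − 1)`
      (((k + r : ℚ) * k) / ((β : ℚ) * k) = (k + r : ℚ) / ((dtilde : ℚ) - 1)) := by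
  obtain ⟨v, -, -, hvd⟩ := hd_ex
  have hβk : β < k := by
    have := hammingNorm_le_card_fintype (x := v)
    rw [Fintype.card_fin] at this
    omega
  have : NeZero k := ⟨by omega⟩
  have : NeZero β := ⟨by omega⟩
  set S : Finset (Fin k) := {j | (j : ℕ) < β}
  have hS : #S = β := by rw [Fin.card_filter_val_lt]; omega
  have hrow (t) : #{l | shiftPattern S t l} = β := hS ▸ card_shiftPattern_row S t
  have hcol (l) : #{t | shiftPattern S t l} = β := hS ▸ card_shiftPattern_col S l
  have hcorr (t) (v : Fin k → K) (hv : P *ᵥ v = 0) (hsupp : ∀ l, v l ≠ 0 → shiftPattern S t l) :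
      v = 0 :=
    eq_zero_of_support_subset_of_card_lt hd_le (by rw [hrow t]; omega) hv fun l hl => mem_filter.mpr ⟨mem_univ l, hsupp l hl⟩
  have hinj (l t t') (ht : shiftPattern S t l) (ht' : shiftPattern S t' l)
      (h : shiftOffset β l t = shiftOffset β l t') : t = t' :=
    shiftOffset_injOn (by simpa [shiftPattern, S] using ht) (by simpa [shiftPattern, S] using ht') h
  refine ⟨shiftPattern S, shiftOffset β, hrow, hcol, hcorr, hinj, fun f m U X X' =>
    pir_recovery hcorr (by simpa using hcol) hinj X X', ?_⟩
  have hk : (k : ℚ) ≠ 0 := by exact_mod_cast NeZero.ne k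
  rw [mul_div_mul_right _ _ hk, hβ, Nat.cast_sub (by omega)]
  push_cast
  ring

/-- For `β = d̃_min − 1` (where `d̃_min` is the minimum Hamming weight of a nonzero
vector of the code `C̃ = ker P`), there exist a `β`-regular 0/1 matrix `E` whose rows
are ML-correctable erasure patterns for `C̃` and injections `σ l`, such that the
resulting PIR protocol recovers the requested file from the responses for every `U`,
every number of files `f`, and every requested index `m`; its communication price of
privacy equals `n / (d̃_min − 1)` with `n = k + r`. -/
theorem stmt_2 {K : Type} [Field K] [DecidableEq K] {k r : ℕ}
    (hr : 1 ≤ r) (hrk : r < k)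
    (P : Matrix (Fin r) (Fin k) K)
    (dtilde : ℕ)
    (hd_le : ∀ v : Fin k → K, P.mulVec v = 0 → v ≠ 0 → dtilde ≤ hammingNorm v)
    (hd_ex : ∃ v : Fin k → K, P.mulVec v = 0 ∧ v ≠ 0 ∧ hammingNorm v = dtilde)
    (β : ℕ) (hβ : β = dtilde - 1) (hβ1 : 1 ≤ β) :
    ∃ (E : Fin k → Fin k → Bool) (σ : Fin k → Fin k → Fin β),
      -- (1) every row of `E` has exactly `β` ones
      (∀ t : Fin k, (Finset.univ.filter fun l => E t l).card = β) ∧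
      -- (2) every column of `E` has exactly `β` ones
      (∀ l : Fin k, (Finset.univ.filter fun t => E t l).card = β) ∧
      -- (3) the rows of `E` are ML-correctable erasure patterns for `ker P`
      (∀ t : Fin k, ∀ v : Fin k → K, P.mulVec v = 0 →
        (∀ l, v l ≠ 0 → E t l) → v = 0) ∧
      -- the maps `σ l` are injective on `{t : E t l}`
      (∀ l t t', E t l → E t' l → σ l t = σ l t' → t = t') ∧
      -- recovery: equal responses imply equal requested files
      (∀ (f : ℕ) (m : Fin f) (U : Matrix (Fin k) (Fin f × Fin β) K)
          (X X' : Fin f → Matrix (Fin β) (Fin k) K),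
        (∀ l : Fin k,
          (U + (Matrix.of fun (t : Fin k) (p : Fin f × Fin β) =>
              if p.1 = m ∧ E t l ∧ σ l t = p.2 then (1 : K) else 0)).mulVec
              (fun p => X p.1 p.2 l) =
            (U + (Matrix.of fun (t : Fin k) (p : Fin f × Fin β) =>
                if p.1 = m ∧ E t l ∧ σ l t = p.2 then (1 : K) else 0)).mulVec
              (fun p => X' p.1 p.2 l)) →
        (∀ p : Fin r,
          U.mulVec (fun q => -∑ l, P p l * X q.1 q.2 l) =
            U.mulVec (fun q => -∑ l, P p l * X' q.1 q.2 l)) →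
        X m = X' m) ∧
      -- cPoP: `(n·k)/(β·k) = n/(d̃_min − 1)`
      (((k + r : ℚ) * k) / ((β : ℚ) * k) = (k + r : ℚ) / ((dtilde : ℚ) - 1)) :=
  stmt_2_general P dtilde hd_le hd_ex β hβ hβ1
end
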